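/- arXiv:1207.4217 — 2 statements merged into one kernel-verified Lean document; each statement's English description precedes it below -/
import Mathlib

section
/- Let σ ∈ (0,π) and g(z) = cz/((1+az)(1+bz)) for constants a, b, c > 0. Then there is a constant C depending only on σ such that |g(z)| ≤ C·c/(a+b) for all z in the sector Σ_σ = {z ∈ ℂ∖(-∞,0] : |arg z| < σ}. -/
/-!
For `z` in the sector and `x ≥ 0`, `Re z ≥ ‖z‖ cos σ` gives
`‖1 + x z‖² = 1 + 2x Re z + x²‖z‖² ≥ ε (1 + x‖z‖)²` with `ε = (1 + cos σ)/2 > 0`.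
Hence `‖(1 + a z)(1 + b z)‖ ≥ ε (1 + a‖z‖)(1 + b‖z‖) ≥ ε (a + b)‖z‖`,
so `C = 1/ε` works, and it depends only on `σ`.
-/

open scoped Real

noncomputable section

/-- The open sector `Σ_σ = {z ∈ ℂ ∖ (-∞,0] : |arg z| < σ}` around the positive real
axis. -/
def Sector (σ : ℝ) : Set ℂ := {z : ℂ | z ≠ 0 ∧ |Complex.arg z| < σ}

namespace Complex

variable {σ : ℝ} {w : ℂ}

lemma norm_mul_cos_le_re (hw : |arg w| ≤ σ) (hσ : σ ≤ π) : ‖w‖ * Real.cos σ ≤ w.re := by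
  rw [← norm_mul_cos_arg, ← Real.cos_abs (arg w)]
  exact mul_le_mul_of_nonneg_left
    (Real.cos_le_cos_of_nonneg_of_le_pi (abs_nonneg _) hσ hw) (norm_nonneg w)

lemma mul_sq_one_add_norm_le_sq_norm_one_add (hw : |arg w| ≤ σ) (hσ : σ ≤ π) :
    (1 + Real.cos σ) / 2 * (1 + ‖w‖) ^ 2 ≤ ‖1 + w‖ ^ 2 := by
  have hre := norm_mul_cos_le_re hw hσ
  have hsq : ‖1 + w‖ ^ 2 = 1 + 2 * w.re + ‖w‖ ^ 2 := by
    rw [Complex.sq_norm, Complex.sq_norm, normSq_add]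
    simp only [map_one, one_mul, conj_re]
    ring
  -- `1 + 2xc + x² = (1 + c)/2 · (1 + x)² + (1 - c)/2 · (1 - x)²`
  nlinarith [mul_nonneg (sub_nonneg.2 (Real.cos_le_one σ)) (sq_nonneg (1 - ‖w‖))]

lemma sqrt_mul_one_add_norm_le_norm_one_add (hw : |arg w| ≤ σ) (hσ : σ ≤ π) :
    √((1 + Real.cos σ) / 2) * (1 + ‖w‖) ≤ ‖1 + w‖ := by
  have hε : 0 ≤ (1 + Real.cos σ) / 2 := by linarith [Real.neg_one_le_cos σ]
  rw [← pow_le_pow_iff_left₀ (by positivity) (norm_nonneg _) two_ne_zero, mul_pow,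
    Real.sq_sqrt hε]
  exact mul_sq_one_add_norm_le_sq_norm_one_add hw hσ

lemma mul_add_mul_norm_le_norm_one_add_mul_mul {a b : ℝ} (ha : 0 < a) (hb : 0 < b) {z : ℂ}
    (hz : |arg z| ≤ σ) (hσ : σ ≤ π) :
    (1 + Real.cos σ) / 2 * ((a + b) * ‖z‖) ≤ ‖(1 + a * z) * (1 + b * z)‖ := by
  have hfactor {x : ℝ} (hx : 0 < x) : √((1 + Real.cos σ) / 2) * (1 + x * ‖z‖) ≤ ‖1 + x * z‖ := by
    simpa [norm_mul, abs_of_pos hx] using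
      sqrt_mul_one_add_norm_le_norm_one_add (w := x * z) (by rwa [arg_real_mul z hx]) hσ
  have hε : 0 ≤ (1 + Real.cos σ) / 2 := by linarith [Real.neg_one_le_cos σ]
  calc (1 + Real.cos σ) / 2 * ((a + b) * ‖z‖)
      ≤ (1 + Real.cos σ) / 2 * ((1 + a * ‖z‖) * (1 + b * ‖z‖)) := by
        refine mul_le_mul_of_nonneg_left ?_ hε
        nlinarith [mul_nonneg (mul_nonneg ha.le hb.le) (sq_nonneg ‖z‖)]
    _ = (√((1 + Real.cos σ) / 2) * (1 + a * ‖z‖)) *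
          (√((1 + Real.cos σ) / 2) * (1 + b * ‖z‖)) := by
        rw [mul_mul_mul_comm, Real.mul_self_sqrt hε]
    _ ≤ ‖1 + a * z‖ * ‖1 + b * z‖ := by
        gcongr ?_ * ?_
        exacts [hfactor ha, hfactor hb]
    _ = ‖(1 + a * z) * (1 + b * z)‖ := (norm_mul _ _).symm

end Complex

/-- Let `σ ∈ (0,π)` and `g(z) = c z / ((1+az)(1+bz))` for constants
`a, b, c > 0`. Then there is a constant `C` depending only on `σ` such that
`|g(z)| ≤ C · c / (a+b)` for all `z ∈ Σ_σ`, uniformly in `a, b, c`. -/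
theorem sector_rational_bound (σ : ℝ) (hσ0 : 0 < σ) (hσπ : σ < Real.pi) :
    ∃ C : ℝ, 0 < C ∧ ∀ a b c : ℝ, 0 < a → 0 < b → 0 < c → ∀ z ∈ Sector σ,
      ‖((c : ℂ) * z) / ((1 + (a : ℂ) * z) * (1 + (b : ℂ) * z))‖ ≤ C * (c / (a + b)) := by
  have hε : 0 < (1 + Real.cos σ) / 2 := by
    have := Real.cos_lt_cos_of_nonneg_of_le_pi hσ0.le le_rfl hσπ
    rw [Real.cos_pi] at this
    linarith
  refine ⟨((1 + Real.cos σ) / 2)⁻¹, inv_pos.2 hε, fun a b c ha hb hc z ⟨hz, harg⟩ => ?_⟩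
  have hD := Complex.mul_add_mul_norm_le_norm_one_add_mul_mul ha hb harg.le hσπ.le
  have hz' : 0 < ‖z‖ := norm_pos_iff.2 hz
  have hpos : 0 < (1 + Real.cos σ) / 2 * ((a + b) * ‖z‖) := by positivity
  rw [norm_div, norm_mul, Complex.norm_real, Real.norm_of_nonneg hc.le]
  calc c * ‖z‖ / ‖(1 + a * z) * (1 + b * z)‖
      ≤ c * ‖z‖ / ((1 + Real.cos σ) / 2 * ((a + b) * ‖z‖)) := by gcongr
    _ = ((1 + Real.cos σ) / 2)⁻¹ * (c / (a + b)) := by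
        field_simp [hz'.ne']
end
end

section
/- Let σ ∈ (0,π), α ∈ (0,1), θ ∈ (α−1, α), and set ρ(z) = z^α/(1+z), ψ(z) = z^{1−α}/(1+z). Then there are constants C > 0 and δ = min{α−θ, θ+1−α} > 0 such that for all k, ℓ ∈ ℤ, sup_{z∈Σ_σ} |2^{ℓθ} ρ(2^k z) ψ(2^{k+ℓ} z)| ≤ C·2^{−δ|ℓ|}. Consequently ∑_{ℓ∈ℤ} sup_{z∈Σ_σ} |2^{ℓθ} ρ(2^k z) ψ(2^{k+ℓ} z)| < ∞, uniformly in k. -/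
/-! On a sector of half-angle `σ < π` one has `cos (σ/2) (1 + ‖w‖) ≤ ‖1 + w‖`. Writing `u = 2^k z`
and `s = 2^ℓ`, the product is `ρ(u) ψ(s u)` of norm `s^(1-α) ‖u‖ / (‖1 + u‖ ‖1 + s u‖)`, and
`(1 + s) ‖u‖ ≤ (1 + ‖u‖)(1 + s ‖u‖)` bounds it by `cos (σ/2)⁻² s^(1-α) / (1 + s)`, uniformly in `k`.
After the factor `2^(ℓθ)` this is `2^(ℓβ) / (1 + 2^ℓ)` with `β = θ + 1 - α`, which is at most
`2^(ℓβ)` for `ℓ ≤ 0` and `2^(ℓ(β-1))` for `ℓ ≥ 0`, i.e. at most `2^(-δ|ℓ|)`; a two-sided geometric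
series then gives the summability. -/

open scoped Real

noncomputable section

/-- `ρ(2^k z) · ψ(2^{k+ℓ} z)` with `ρ(w) = w^α/(1+w)` and `ψ(w) = w^{1-α}/(1+w)`
(principal branch powers). -/
def rhoPsi (α : ℝ) (k ℓ : ℤ) (z : ℂ) : ℂ :=
  (((2 : ℂ) ^ k * z) ^ (α : ℂ) / (1 + (2 : ℂ) ^ k * z)) *
    (((2 : ℂ) ^ (k + ℓ) * z) ^ (((1 - α : ℝ)) : ℂ) / (1 + (2 : ℂ) ^ (k + ℓ) * z))

open Real
open Complex hiding cos

lemma cos_half_mul_one_add_norm_le_norm_one_add {σ : ℝ} (hσ : σ ≤ π) {w : ℂ}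
    (hw : |arg w| ≤ σ) : cos (σ / 2) * (1 + ‖w‖) ≤ ‖1 + w‖ := by
  have hcos : cos σ ≤ cos (arg w) := by
    rw [← Real.cos_abs (arg w)]
    exact cos_le_cos_of_nonneg_of_le_pi (abs_nonneg _) hσ hw
  have hsq : ‖1 + w‖ ^ 2 = 1 + 2 * (‖w‖ * cos (arg w)) + ‖w‖ ^ 2 := by
    rw [norm_mul_cos_arg, Complex.sq_norm, Complex.sq_norm, Complex.normSq_apply,
      Complex.normSq_apply]
    simp only [add_re, add_im, one_re, one_im]
    ring
  have hhalf : cos (σ / 2) ^ 2 = (1 + cos σ) / 2 := by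
    rw [Real.cos_sq]; ring_nf
  refine le_of_sq_le_sq ?_ (norm_nonneg _)
  -- `‖1 + w‖² - cos²(σ/2)(1 + ‖w‖)² = (1 - cos σ)(1 - ‖w‖)²/2 + 2‖w‖(cos (arg w) - cos σ)`
  rw [mul_pow, hhalf, hsq]
  nlinarith [mul_nonneg (sub_nonneg.2 (cos_le_one σ)) (sq_nonneg (1 - ‖w‖)),
    mul_nonneg (norm_nonneg w) (sub_nonneg.2 hcos)]

lemma norm_div_norm_one_add_mul_norm_one_add_le {σ s : ℝ} (hσ : σ < π) (hs : 0 < s) {u : ℂ}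
    (hu : |arg u| ≤ σ) :
    ‖u‖ / (‖1 + u‖ * ‖1 + s * u‖) ≤ (cos (σ / 2) ^ 2)⁻¹ / (1 + s) := by
  have hc : 0 < cos (σ / 2) := cos_pos_of_mem_Ioo
    ⟨by linarith [abs_nonneg (arg u), pi_pos], by linarith⟩
  have h₁ := cos_half_mul_one_add_norm_le_norm_one_add hσ.le hu
  have h₂ := cos_half_mul_one_add_norm_le_norm_one_add hσ.le (w := s * u)
    (by rwa [arg_real_mul u hs])
  rw [norm_mul, norm_real, Real.norm_of_nonneg hs.le] at h₂
  have hprod : cos (σ / 2) ^ 2 * ((1 + ‖u‖) * (1 + s * ‖u‖)) ≤ ‖1 + u‖ * ‖1 + s * u‖ := by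
    rw [sq, mul_mul_mul_comm]
    exact mul_le_mul h₁ h₂ (by positivity) (norm_nonneg _)
  rw [div_le_div_iff₀ (lt_of_lt_of_le (by positivity) hprod) (by positivity),
    inv_mul_eq_div, le_div_iff₀ (by positivity)]
  nlinarith [norm_nonneg u, mul_nonneg hs.le (sq_nonneg ‖u‖)]

lemma rpow_mul_div_one_add_rpow_le {b β δ x : ℝ} (hb : 1 ≤ b) (hδβ : δ ≤ β)
    (hδβ' : δ ≤ 1 - β) : b ^ (x * β) / (1 + b ^ x) ≤ b ^ (-δ * |x|) := by
  have hb0 : 0 < b := by linarith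
  rcases le_total 0 x with hx | hx
  · calc b ^ (x * β) / (1 + b ^ x) ≤ b ^ (x * β) / b ^ x :=
          div_le_div_of_nonneg_left (by positivity) (by positivity) (by linarith)
      _ = b ^ (x * β - x) := (rpow_sub hb0 _ _).symm
      _ ≤ b ^ (-δ * |x|) := by
          rw [abs_of_nonneg hx]
          exact rpow_le_rpow_of_exponent_le hb (by nlinarith)
  · calc b ^ (x * β) / (1 + b ^ x) ≤ b ^ (x * β) :=
          div_le_self (by positivity) (by linarith [rpow_nonneg hb0.le x])
      _ ≤ b ^ (-δ * |x|) := by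
          rw [abs_of_nonpos hx]
          exact rpow_le_rpow_of_exponent_le hb (by nlinarith)

lemma norm_rhoPsi (α : ℝ) (k ℓ : ℤ) (z : ℂ) :
    ‖rhoPsi α k ℓ z‖ = (2 : ℝ) ^ ((ℓ : ℝ) * (1 - α)) * ‖(2 : ℂ) ^ k * z‖ /
      (‖1 + (2 : ℂ) ^ k * z‖ * ‖1 + ((2 : ℝ) ^ ℓ : ℝ) * ((2 : ℂ) ^ k * z)‖) := by
  have hshift : (2 : ℂ) ^ (k + ℓ) * z = ((2 : ℝ) ^ ℓ : ℝ) * ((2 : ℂ) ^ k * z) := by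
    push_cast; rw [zpow_add₀ two_ne_zero]; ring
  have hpow : ((2 : ℝ) ^ ℓ) ^ (1 - α) = (2 : ℝ) ^ ((ℓ : ℝ) * (1 - α)) := by
    rw [← rpow_intCast, ← rpow_mul zero_le_two]
  rw [rhoPsi, hshift]
  generalize (2 : ℂ) ^ k * z = u
  have hsplit : ‖u‖ ^ α * ‖u‖ ^ (1 - α) = ‖u‖ := by
    rw [← rpow_add' (norm_nonneg u) (by simp), add_sub_cancel, rpow_one]
  rw [norm_mul, norm_div, norm_div, norm_cpow_real, norm_cpow_real, norm_mul, norm_real,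
    Real.norm_of_nonneg (by positivity), mul_rpow (by positivity) (norm_nonneg _), hpow,
    div_mul_div_comm, mul_left_comm, hsplit]

lemma two_rpow_mul_norm_rhoPsi_le {σ α θ δ : ℝ} (hσ : σ < π) (hδ₁ : δ ≤ α - θ)
    (hδ₂ : δ ≤ θ + 1 - α) (k ℓ : ℤ) {z : ℂ} (hz : z ∈ Sector σ) :
    (2 : ℝ) ^ ((ℓ : ℝ) * θ) * ‖rhoPsi α k ℓ z‖
      ≤ (cos (σ / 2) ^ 2)⁻¹ * (2 : ℝ) ^ (-δ * |(ℓ : ℝ)|) := by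
  have hu : |arg ((2 : ℂ) ^ k * z)| ≤ σ := by
    rw [show (2 : ℂ) ^ k * z = ((2 : ℝ) ^ k : ℝ) * z by push_cast; rfl,
      arg_real_mul z (by positivity)]
    exact hz.2.le
  have hdecay := rpow_mul_div_one_add_rpow_le (b := 2) (x := ℓ) one_le_two
    hδ₂ (show δ ≤ 1 - (θ + 1 - α) by linarith)
  rw [rpow_intCast] at hdecay
  rw [norm_rhoPsi]
  generalize (2 : ℂ) ^ k * z = u at hu ⊢
  calc (2 : ℝ) ^ ((ℓ : ℝ) * θ) * ((2 : ℝ) ^ ((ℓ : ℝ) * (1 - α)) * ‖u‖ /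
        (‖1 + u‖ * ‖1 + ((2 : ℝ) ^ ℓ : ℝ) * u‖))
      = (2 : ℝ) ^ ((ℓ : ℝ) * (θ + 1 - α)) *
          (‖u‖ / (‖1 + u‖ * ‖1 + ((2 : ℝ) ^ ℓ : ℝ) * u‖)) := by
        rw [mul_div_assoc, ← mul_assoc, ← rpow_add two_pos]
        ring_nf
    _ ≤ (2 : ℝ) ^ ((ℓ : ℝ) * (θ + 1 - α)) * ((cos (σ / 2) ^ 2)⁻¹ / (1 + (2 : ℝ) ^ ℓ)) :=
        mul_le_mul_of_nonneg_left
          (norm_div_norm_one_add_mul_norm_one_add_le hσ (zpow_pos two_pos ℓ) hu) (by positivity)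
    _ = (cos (σ / 2) ^ 2)⁻¹ * ((2 : ℝ) ^ ((ℓ : ℝ) * (θ + 1 - α)) / (1 + (2 : ℝ) ^ ℓ)) := by
        ring
    _ ≤ (cos (σ / 2) ^ 2)⁻¹ * (2 : ℝ) ^ (-δ * |(ℓ : ℝ)|) := by
        gcongr

lemma summable_rpow_neg_mul_abs {b δ : ℝ} (hb : 1 < b) (hδ : 0 < δ) :
    Summable fun ℓ : ℤ => b ^ (-δ * |(ℓ : ℝ)|) := by
  have hgeo : Summable fun n : ℕ => (b ^ (-δ)) ^ n :=
    summable_geometric_of_lt_one (by positivity) (rpow_lt_one_of_one_lt_of_neg hb (by linarith))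
  have hterm (n : ℕ) : (b ^ (-δ)) ^ n = b ^ (-δ * n) := by
    rw [← rpow_natCast, ← rpow_mul (by linarith)]
  refine .of_nat_of_neg (hgeo.congr fun n => ?_) (hgeo.congr fun n => ?_) <;> simp [hterm]

lemma summable_biSup_of_le {ι X : Type*} {f : ι → X → ℝ} {g : ι → ℝ} {S : Set X}
    (hf : ∀ i, ∀ x ∈ S, 0 ≤ f i x) (hfg : ∀ i, ∀ x ∈ S, f i x ≤ g i) (hg₀ : 0 ≤ g)
    (hg : Summable g) : Summable fun i => ⨆ x ∈ S, f i x :=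
  hg.of_nonneg_of_le (fun i => Real.iSup_nonneg fun x => Real.iSup_nonneg (hf i x))
    fun i => Real.iSup_le (fun x => Real.iSup_le (hfg i x) (hg₀ i)) (hg₀ i)

theorem rho_psi_dyadic_decay_general (σ α θ : ℝ) (hσ0 : 0 < σ) (hσπ : σ < Real.pi)
    (hθ1 : α - 1 < θ) (hθ2 : θ < α) :
    0 < min (α - θ) (θ + 1 - α) ∧
      ∃ C : ℝ, 0 < C ∧
        (∀ k ℓ : ℤ, ∀ z ∈ Sector σ,
          (2 : ℝ) ^ ((ℓ : ℝ) * θ) * ‖rhoPsi α k ℓ z‖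
            ≤ C * (2 : ℝ) ^ (-(min (α - θ) (θ + 1 - α)) * |(ℓ : ℝ)|)) ∧
        ∀ k : ℤ, Summable fun ℓ : ℤ =>
          ⨆ z ∈ Sector σ, (2 : ℝ) ^ ((ℓ : ℝ) * θ) * ‖rhoPsi α k ℓ z‖ := by
  have hδ : 0 < min (α - θ) (θ + 1 - α) := lt_min (by linarith) (by linarith)
  have hc : 0 < cos (σ / 2) := cos_pos_of_mem_Ioo ⟨by linarith, by linarith⟩
  have hbound := two_rpow_mul_norm_rhoPsi_le (α := α) hσπ (min_le_left _ (θ + 1 - α))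
    (min_le_right (α - θ) _)
  refine ⟨hδ, _, by positivity, hbound, fun k => ?_⟩
  exact summable_biSup_of_le (fun _ _ _ => by positivity) (hbound k) (fun _ => by positivity)
    ((summable_rpow_neg_mul_abs one_lt_two hδ).mul_left _)

/-- Let `σ ∈ (0,π)`, `α ∈ (0,1)`, `θ ∈ (α−1, α)` and
`δ = min (α−θ) (θ+1−α) > 0`. Then there is `C > 0` such that for all `k, ℓ ∈ ℤ`,
`sup_{z ∈ Σ_σ} |2^{ℓθ} ρ(2^k z) ψ(2^{k+ℓ} z)| ≤ C · 2^{−δ|ℓ|}`; consequently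
`∑_{ℓ ∈ ℤ} sup_{z ∈ Σ_σ} |2^{ℓθ} ρ(2^k z) ψ(2^{k+ℓ} z)| < ∞`, uniformly in `k`. -/
theorem rho_psi_dyadic_decay (σ α θ : ℝ) (hσ0 : 0 < σ) (hσπ : σ < Real.pi)
    (hα0 : 0 < α) (hα1 : α < 1) (hθ1 : α - 1 < θ) (hθ2 : θ < α) :
    0 < min (α - θ) (θ + 1 - α) ∧
      ∃ C : ℝ, 0 < C ∧
        (∀ k ℓ : ℤ, ∀ z ∈ Sector σ,
          (2 : ℝ) ^ ((ℓ : ℝ) * θ) * ‖rhoPsi α k ℓ z‖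
            ≤ C * (2 : ℝ) ^ (-(min (α - θ) (θ + 1 - α)) * |(ℓ : ℝ)|)) ∧
        ∀ k : ℤ, Summable fun ℓ : ℤ =>
          ⨆ z ∈ Sector σ, (2 : ℝ) ^ ((ℓ : ℝ) * θ) * ‖rhoPsi α k ℓ z‖ :=
  rho_psi_dyadic_decay_general σ α θ hσ0 hσπ hθ1 hθ2
end
end
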